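/- Let (X,G) be a Cantor dynamical system. If the full group [G] has many involutions (via the construction through group elements: every nonempty clopen set A contains a clopen V with g(V) ⊆ A, g(V) ∩ V = ∅ for some g ∈ G), then the topological full group [[G]] has many involutions: every nonempty regular open set contains the support of a nontrivial involution in [[G]]. -/

import Mathlib

open Set

variable {X : Type*} [TopologicalSpace X]

noncomputable instance Homeomorph.instGroup' : Group (X ≃ₜ X) where
  mul f g := g.trans f
  one := Homeomorph.refl X
  inv := Homeomorph.symm
  mul_assoc _ _ _ := Homeomorph.ext fun _ => rfl
  one_mul _ := Homeomorph.ext fun _ => rfl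
  mul_one _ := Homeomorph.ext fun _ => rfl
  inv_mul_cancel f := Homeomorph.ext fun x => f.symm_apply_apply x

@[simp] theorem Homeomorph.mul_apply' (f g : X ≃ₜ X) (x : X) : (f * g) x = f (g x) := rfl
@[simp] theorem Homeomorph.one_apply' (x : X) : (1 : X ≃ₜ X) x = x := rfl

/-- The support of a homeomorphism. -/
def spr (γ : X ≃ₜ X) : Set X := interior (closure {x | γ x ≠ x})

/-- The orbit of a point under a subgroup of homeomorphisms. -/
def orbitOf (G : Subgroup (X ≃ₜ X)) (x : X) : Set X := {y | ∃ g ∈ G, (g : X ≃ₜ X) x = y}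

/-- The full group of a Cantor dynamical system. -/
def fullGroup (G : Subgroup (X ≃ₜ X)) : Subgroup (X ≃ₜ X) where
  carrier := {γ | ∀ x, γ x ∈ orbitOf G x}
  one_mem' x := ⟨1, G.one_mem, rfl⟩
  mul_mem' {a b} ha hb x := by
    obtain ⟨h, hh, hbx⟩ := hb x
    obtain ⟨g, hg, hax⟩ := ha (b x)
    exact ⟨g * h, G.mul_mem hg hh, by simp only [Homeomorph.mul_apply'] at *; rw [hbx, hax]⟩
  inv_mem' {a} ha := by
    intro x
    obtain ⟨g, hg, hax⟩ := ha (a⁻¹ x)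
    refine ⟨g⁻¹, G.inv_mem hg, ?_⟩
    have : a (a⁻¹ x) = x := a.apply_symm_apply x
    rw [this] at hax
    have : (g⁻¹ : X ≃ₜ X) (g (a⁻¹ x)) = a⁻¹ x := g.symm_apply_apply _
    rw [hax] at this
    exact this


/-- The topological full group of a Cantor dynamical system. -/
def topFullSet (G : Subgroup (X ≃ₜ X)) : Set (X ≃ₜ X) :=
  {γ | γ ∈ fullGroup G ∧ ∃ (n : ℕ) (U : Fin n → Set X) (g : Fin n → X ≃ₜ X),
    (∀ i, IsClopen (U i)) ∧ (∀ i j, i ≠ j → U i ∩ U j = ∅) ∧ (⋃ i, U i) = Set.univ ∧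
    (∀ i, g i ∈ G) ∧ ∀ i, ∀ x ∈ U i, γ x = g i x}

/-!
Inside a nonempty regular open set `A` choose a nonempty clopen `B ⊆ A` (the space is
zero-dimensional) and apply the hypothesis to `B`: it gives a clopen `V ⊆ B` and `e ∈ G` with
`e '' V ⊆ B` disjoint from `V`. The homeomorphism acting as `e` on `V`, as `e⁻¹` on `e '' V` and
as the identity elsewhere is a nontrivial involution, it is piecewise in `G` on the clopen
partition `V, e '' V, (V ∪ e '' V)ᶜ`, and its support lies in the clopen set `V ∪ e '' V ⊆ A`.
-/

theorem spr_subset_of_isClosed {γ : X ≃ₜ X} {C : Set X} (hC : IsClosed C)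
    (hγ : ∀ x ∉ C, γ x = x) : spr γ ⊆ C :=
  interior_subset.trans <| closure_minimal (fun x hx => not_imp_comm.mp (hγ x) hx) hC

theorem mem_topFullSet_of_partition {G : Subgroup (X ≃ₜ X)} {γ : X ≃ₜ X} {n : ℕ}
    {U : Fin n → Set X} {g : Fin n → X ≃ₜ X} (hU : ∀ i, IsClopen (U i))
    (hdisj : ∀ i j, i ≠ j → U i ∩ U j = ∅) (hcover : ⋃ i, U i = univ) (hg : ∀ i, g i ∈ G)
    (hγ : ∀ i, ∀ x ∈ U i, γ x = g i x) : γ ∈ topFullSet G := by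
  refine ⟨fun x => ?_, n, U, g, hU, hdisj, hcover, hg, hγ⟩
  obtain ⟨i, hi⟩ := mem_iUnion.mp (hcover.symm ▸ mem_univ x : x ∈ ⋃ i, U i)
  exact ⟨g i, hg i, (hγ i x hi).symm⟩

theorem mem_topFullSet_of_piecewise_three {G : Subgroup (X ≃ₜ X)} {γ a b : X ≃ₜ X}
    {V W : Set X} (hV : IsClopen V) (hW : IsClopen W) (hVW : Disjoint V W) (ha : a ∈ G)
    (hb : b ∈ G) (hγV : ∀ x ∈ V, γ x = a x) (hγW : ∀ x ∈ W, γ x = b x)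
    (hγ : ∀ x, x ∉ V → x ∉ W → γ x = x) : γ ∈ topFullSet G := by
  refine mem_topFullSet_of_partition (U := ![V, W, (V ∪ W)ᶜ]) (g := ![a, b, 1])
    ?_ ?_ ?_ ?_ ?_
  · intro i
    fin_cases i
    exacts [hV, hW, (hV.union hW).compl]
  · have hVc : Disjoint V (V ∪ W)ᶜ := disjoint_compl_right.mono_left subset_union_left
    have hWc : Disjoint W (V ∪ W)ᶜ := disjoint_compl_right.mono_left subset_union_right
    intro i j hij
    fin_cases i <;> fin_cases j <;>
      simp_all [← disjoint_iff_inter_eq_empty, disjoint_comm]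
  · ext x
    by_cases hxV : x ∈ V
    · simpa using ⟨0, hxV⟩
    by_cases hxW : x ∈ W
    · simpa using ⟨1, hxW⟩
    · simpa using ⟨2, by simp [hxV, hxW]⟩
  · intro i
    fin_cases i
    exacts [ha, hb, G.one_mem]
  · intro i
    fin_cases i
    · exact hγV
    · exact hγW
    · intro x hx
      exact hγ x (fun h => hx (.inl h)) (fun h => hx (.inr h))

namespace Homeomorph

theorem isClopen_image (e : X ≃ₜ X) {V : Set X} (hV : IsClopen V) : IsClopen (e '' V) :=
  ⟨e.isClosedMap V hV.isClosed, e.isOpenMap V hV.isOpen⟩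

open Classical in
noncomputable def swapImageFun (e : X ≃ₜ X) (V : Set X) : X → X :=
  V.piecewise e ((e '' V).piecewise e.symm id)

variable {e : X ≃ₜ X} {V : Set X}

theorem swapImageFun_of_mem {x : X} (hx : x ∈ V) : swapImageFun e V x = e x := by
  classical
  exact piecewise_eq_of_mem _ _ _ hx

theorem swapImageFun_of_mem_image (hdisj : Disjoint (e '' V) V) {x : X} (hx : x ∈ e '' V) :
    swapImageFun e V x = e.symm x := by
  classical
  rw [swapImageFun, piecewise_eq_of_notMem _ _ _ (hdisj.notMem_of_mem_left hx),
    piecewise_eq_of_mem _ _ _ hx]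

theorem swapImageFun_of_notMem {x : X} (hV : x ∉ V) (hW : x ∉ e '' V) :
    swapImageFun e V x = x := by
  classical
  rw [swapImageFun, piecewise_eq_of_notMem _ _ _ hV, piecewise_eq_of_notMem _ _ _ hW, id]

theorem swapImageFun_involutive (hdisj : Disjoint (e '' V) V) :
    Function.Involutive (swapImageFun e V) := by
  intro x
  by_cases hxV : x ∈ V
  · rw [swapImageFun_of_mem hxV, swapImageFun_of_mem_image hdisj (mem_image_of_mem e hxV),
      symm_apply_apply]
  by_cases hxW : x ∈ e '' V
  · obtain ⟨v, hv, rfl⟩ := hxW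
    rw [swapImageFun_of_mem_image hdisj (mem_image_of_mem e hv), symm_apply_apply,
      swapImageFun_of_mem hv]
  · rw [swapImageFun_of_notMem hxV hxW, swapImageFun_of_notMem hxV hxW]

theorem continuous_swapImageFun (hV : IsClopen V) : Continuous (swapImageFun e V) := by
  classical
  refine Continuous.piecewise (by simp [hV.frontier_eq]) e.continuous ?_
  exact Continuous.piecewise (by simp [(e.isClopen_image hV).frontier_eq]) e.symm.continuous
    continuous_id

noncomputable def swapImage (e : X ≃ₜ X) (hV : IsClopen V) (hdisj : Disjoint (e '' V) V) :
    X ≃ₜ X where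
  toEquiv := (swapImageFun_involutive hdisj).toPerm
  continuous_toFun := continuous_swapImageFun hV
  continuous_invFun := continuous_swapImageFun hV

variable (hV : IsClopen V) (hdisj : Disjoint (e '' V) V)

theorem swapImage_mul_self : swapImage e hV hdisj * swapImage e hV hdisj = 1 :=
  Homeomorph.ext (swapImageFun_involutive hdisj)

theorem swapImage_ne_one (hne : V.Nonempty) : swapImage e hV hdisj ≠ 1 := by
  obtain ⟨v, hv⟩ := hne
  intro h
  have hfix : e v = v := (swapImageFun_of_mem hv).symm.trans (DFunLike.congr_fun h v)
  exact hdisj.notMem_of_mem_right hv (hfix ▸ mem_image_of_mem e hv)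

theorem spr_swapImage_subset : spr (swapImage e hV hdisj) ⊆ V ∪ e '' V :=
  spr_subset_of_isClosed (hV.union (e.isClopen_image hV)).isClosed fun _ hx =>
    swapImageFun_of_notMem (fun h => hx (.inl h)) (fun h => hx (.inr h))

theorem swapImage_mem_topFullSet {G : Subgroup (X ≃ₜ X)} (he : e ∈ G) :
    swapImage e hV hdisj ∈ topFullSet G :=
  mem_topFullSet_of_piecewise_three hV (e.isClopen_image hV) hdisj.symm he (G.inv_mem he)
    (fun _ => swapImageFun_of_mem) (fun _ => swapImageFun_of_mem_image hdisj)
    (fun _ => swapImageFun_of_notMem)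

end Homeomorph

theorem topFullGroup_many_involutions_general {X : Type*} [TopologicalSpace X] [CompactSpace X] [TopologicalSpace.MetrizableSpace X] [TotallyDisconnectedSpace X]
    (G : Subgroup (X ≃ₜ X))
    (h : ∀ A : Set X, IsClopen A → A.Nonempty →
      ∃ V : Set X, ∃ g ∈ G, IsClopen V ∧ V.Nonempty ∧ V ⊆ A ∧
        (g : X ≃ₜ X) '' V ⊆ A ∧ ((g : X ≃ₜ X) '' V) ∩ V = ∅) :
    ∀ A : Set X, A = interior (closure A) → A.Nonempty →
      ∃ π ∈ topFullSet G, π * π = 1 ∧ π ≠ 1 ∧ spr π ⊆ A := by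
  intro A hA ⟨x₀, hx₀⟩
  obtain ⟨B, hB, hx₀B, hBA⟩ := compact_exists_isClopen_in_isOpen (hA ▸ isOpen_interior) hx₀
  obtain ⟨V, e, he, hV, hVne, hVB, heVB, heV⟩ := h B hB ⟨x₀, hx₀B⟩
  have hdisj : Disjoint (e '' V) V := disjoint_iff_inter_eq_empty.mpr heV
  exact ⟨e.swapImage hV hdisj, Homeomorph.swapImage_mem_topFullSet hV hdisj he,
    Homeomorph.swapImage_mul_self hV hdisj, Homeomorph.swapImage_ne_one hV hdisj hVne,
    (Homeomorph.spr_swapImage_subset hV hdisj).trans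
      (union_subset (hVB.trans hBA) (heVB.trans hBA))⟩

/-- If the full group has many involutions via the clopen construction through group elements,
then so does the topological full group. -/
theorem topFullGroup_many_involutions {X : Type*} [TopologicalSpace X] [CompactSpace X] [TopologicalSpace.MetrizableSpace X] [TotallyDisconnectedSpace X] [PerfectSpace X] [Nonempty X]
    (G : Subgroup (X ≃ₜ X))
    (h : ∀ A : Set X, IsClopen A → A.Nonempty →
      ∃ V : Set X, ∃ g ∈ G, IsClopen V ∧ V.Nonempty ∧ V ⊆ A ∧
        (g : X ≃ₜ X) '' V ⊆ A ∧ ((g : X ≃ₜ X) '' V) ∩ V = ∅) :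
    ∀ A : Set X, A = interior (closure A) → A.Nonempty →
      ∃ π ∈ topFullSet G, π * π = 1 ∧ π ≠ 1 ∧ spr π ⊆ A :=
  topFullGroup_many_involutions_general G h
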